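/- The worst-case mean square regret of the rule δ_H* over the full two-dimensional parameter space is bounded by its worst-case regret over the hardest one-dimensional subproblem: sup_{(θ_e,θ_t)∈Θ} R_sq(δ_H*, θ_e, θ_t) ≤ σ²(a* + k/σ)² ρ(a*). -/

import Mathlib

open Real MeasureTheory

/-- The standard normal density. -/
noncomputable def gaussPdf (x : ℝ) : ℝ :=
  (Real.sqrt (2 * Real.pi))⁻¹ * Real.exp (-(x ^ 2) / 2)

/-- ρ(a) = ∫ (1/(exp(2ay)+1))² φ(y−a) dy. -/
noncomputable def ρ (a : ℝ) : ℝ :=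
  ∫ y : ℝ, (1 / (Real.exp (2 * a * y) + 1)) ^ 2 * gaussPdf (y - a)

/-- Mean square regret in the two-dimensional partially identified problem:
data X ~ N(θ_e, σ²), target effect θ_t. -/
noncomputable def Rsq (σ : ℝ) (δ : ℝ → ℝ) (θe θt : ℝ) : ℝ :=
  θt ^ 2 *
    ∫ x : ℝ, ((if 0 ≤ θt then (1 : ℝ) else 0) - δ x) ^ 2 *
      (σ⁻¹ * gaussPdf ((x - θe) / σ))

/-- The parameter space Θ = {(θ_e, θ_t) : θ_e − k ≤ θ_t ≤ θ_e + k}. -/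
def Θset (k : ℝ) : Set (ℝ × ℝ) := {p | p.1 - k ≤ p.2 ∧ p.2 ≤ p.1 + k}

/-!
For `θ_t ≥ 0` (the case `θ_t < 0` is the mirror image) the regret of `δ_H*` is
`θ_t² r(θ_e / σ)`, where `r(s)` is the risk of the logistic rule `δ_{a*}` at standardized mean
`s`. As `r` is decreasing, the worst case on `Θ` is `s = |θ_t| / σ - k / σ`, and it remains to
maximize `(s + k / σ)² r(s)`. Since `r` is a Gaussian smoothing of the log-concave
`(1 - δ_{a*})²`, `r' / r` is decreasing, so this function is unimodal and is maximized at its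
critical point. That critical point is `a*`: `δ_a` is the Bayes rule against the uniform prior
on `±a`, so `ρ ≤ r` with equality at `a*`, whence `ρ'(a*) = r'(a*)`, and the
first-order condition defining `a*` (an interior one, since `a* = τ*` would contradict the
maximality of `τ*`) is exactly the critical-point equation. If `a* = 0` the rule is constant
`1 / 2`, the regret is unbounded on `Θ`, and Lean's `⨆` of an unbounded family is `0`.
-/

open ProbabilityTheory

lemma gaussPdf_eq_gaussianPDFReal : gaussPdf = gaussianPDFReal 0 1 := by
  ext x
  simp [gaussPdf, gaussianPDFReal]

lemma gaussPdf_pos (x : ℝ) : 0 < gaussPdf x := by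
  rw [gaussPdf_eq_gaussianPDFReal]
  exact gaussianPDFReal_pos _ _ _ one_ne_zero

lemma gaussPdf_neg (x : ℝ) : gaussPdf (-x) = gaussPdf x := by
  simp [gaussPdf]

lemma continuous_gaussPdf : Continuous gaussPdf := by
  unfold gaussPdf
  fun_prop

lemma integrable_gaussPdf : Integrable gaussPdf := by
  rw [gaussPdf_eq_gaussianPDFReal]
  exact integrable_gaussianPDFReal _ _

lemma integral_gaussPdf_sub (c : ℝ) : ∫ y, gaussPdf (y - c) = 1 := by
  rw [integral_sub_right_eq_self, gaussPdf_eq_gaussianPDFReal]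
  exact integral_gaussianPDFReal_eq_one _ one_ne_zero

lemma integrable_mul_gaussPdf : Integrable fun y => y * gaussPdf y := by
  have := (integrable_mul_exp_neg_mul_sq (b := 1 / 2) (by norm_num)).const_mul
    (√(2 * π))⁻¹
  refine this.congr (.of_forall fun y => ?_)
  simp only [gaussPdf]
  ring_nf

lemma hasDerivAt_gaussPdf_sub (y t : ℝ) :
    HasDerivAt (fun t => gaussPdf (y - t)) ((y - t) * gaussPdf (y - t)) t := by
  have h : HasDerivAt (fun t => -(y - t) ^ 2 / 2) (y - t) t :=
    ((((hasDerivAt_id' t).const_sub y).fun_pow 2).fun_neg.div_const 2).congr_deriv (by ring)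
  exact (h.exp.const_mul (√(2 * π))⁻¹).congr_deriv (by simp only [gaussPdf]; ring)

lemma gaussPdf_sub_eq_exp_mul (x y : ℝ) :
    gaussPdf (y - x) = exp (2 * x * y) * gaussPdf (y + x) := by
  simp only [gaussPdf]
  rw [mul_left_comm, ← exp_add]
  ring_nf

lemma gaussPdf_sub_le {t R : ℝ} (htR : |t| ≤ R) (y : ℝ) :
    gaussPdf (y - t) ≤ exp (R ^ 2 / 2) * exp (-(1 / 4) * y ^ 2) := by
  have hc : (√(2 * π))⁻¹ ≤ 1 :=
    inv_le_one_of_one_le₀ (Real.one_le_sqrt.2 (by nlinarith [pi_gt_three]))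
  have ht2 : t ^ 2 ≤ R ^ 2 := sq_le_sq' (abs_le.1 htR).1 (abs_le.1 htR).2
  calc gaussPdf (y - t) ≤ 1 * exp (-(y - t) ^ 2 / 2) := by
        unfold gaussPdf; gcongr
    _ ≤ exp (R ^ 2 / 2) * exp (-(1 / 4) * y ^ 2) := by
        rw [one_mul, ← exp_add]
        gcongr
        nlinarith [sq_nonneg (y - 2 * t)]

lemma integrable_mul_gaussPdf_sub {w : ℝ → ℝ} {M : ℝ} (hw : Continuous w)
    (hwM : ∀ y, |w y| ≤ M) (c : ℝ) : Integrable fun y => w y * gaussPdf (y - c) :=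
  (integrable_gaussPdf.comp_sub_right c).bdd_mul hw.aestronglyMeasurable (.of_forall hwM)

lemma abs_add_mul_gaussPdf_sub_le {u u' t y M C R : ℝ} (hu : |u| ≤ M) (hu' : |u'| ≤ C * |y|)
    (htR : |t| ≤ R) :
    |u' * gaussPdf (y - t) + u * ((y - t) * gaussPdf (y - t))| ≤
      exp (R ^ 2 / 2) *
        ((C + M) * (|y| * exp (-(1 / 4) * y ^ 2)) + M * R * exp (-(1 / 4) * y ^ 2)) := by
  have hM : 0 ≤ M := (abs_nonneg _).trans hu
  have hφ0 := (gaussPdf_pos (y - t)).le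
  have hyt : |y - t| ≤ |y| + R := (abs_sub _ _).trans (by linarith)
  calc |u' * gaussPdf (y - t) + u * ((y - t) * gaussPdf (y - t))|
      ≤ (C * |y| + M * (|y| + R)) * gaussPdf (y - t) := by
        have h1 : |u'| * gaussPdf (y - t) ≤ C * |y| * gaussPdf (y - t) :=
          mul_le_mul_of_nonneg_right hu' hφ0
        have h2 : |u| * (|y - t| * gaussPdf (y - t)) ≤ M * ((|y| + R) * gaussPdf (y - t)) :=
          mul_le_mul hu (mul_le_mul_of_nonneg_right hyt hφ0) (by positivity) hM
        refine (abs_add_le _ _).trans ?_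
        rw [abs_mul, abs_mul, abs_mul, abs_of_nonneg hφ0]
        linarith
    _ ≤ (C * |y| + M * (|y| + R)) * (exp (R ^ 2 / 2) * exp (-(1 / 4) * y ^ 2)) := by
        refine mul_le_mul_of_nonneg_left (gaussPdf_sub_le htR y) (add_nonneg
          ((abs_nonneg _).trans hu') (mul_nonneg hM ?_))
        linarith [abs_nonneg y, (abs_nonneg t).trans htR]
    _ = _ := by ring

lemma hasDerivAt_integral_mul_gaussPdf_sub {w w' : ℝ → ℝ → ℝ} {M C : ℝ} (x : ℝ)
    (hw : ∀ t, Continuous (w t)) (hw' : Continuous (w' x))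
    (hwM : ∀ t y, |w t y| ≤ M) (hw'C : ∀ t y, |w' t y| ≤ C * |y|)
    (hderiv : ∀ t y, HasDerivAt (w · y) (w' t y) t) :
    HasDerivAt (fun t => ∫ y, w t y * gaussPdf (y - t))
      (∫ y, (w' x y * gaussPdf (y - x) + w x y * ((y - x) * gaussPdf (y - x)))) x := by
  have hg : Integrable fun y : ℝ => exp (-(1 / 4) * y ^ 2) :=
    integrable_exp_neg_mul_sq (by norm_num)
  have hyg : Integrable fun y : ℝ => |y| * exp (-(1 / 4) * y ^ 2) := by
    refine (integrable_mul_exp_neg_mul_sq (b := 1 / 4) (by norm_num)).abs.congr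
      (.of_forall fun y => ?_)
    simp [abs_mul]
  have hφc : ∀ t, Continuous fun y => gaussPdf (y - t) :=
    fun t => continuous_gaussPdf.comp (continuous_sub_right t)
  have hF'meas : AEStronglyMeasurable
      (fun y => w' x y * gaussPdf (y - x) + w x y * ((y - x) * gaussPdf (y - x))) :=
    ((hw'.mul (hφc x)).add
      ((hw x).mul ((continuous_sub_right x).mul (hφc x)))).aestronglyMeasurable
  refine (hasDerivAt_integral_of_dominated_loc_of_deriv_le
    (F := fun t y => w t y * gaussPdf (y - t))
    (bound := fun y => exp ((|x| + 1) ^ 2 / 2) * ((C + M) * (|y| * exp (-(1 / 4) * y ^ 2)) +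
      M * (|x| + 1) * exp (-(1 / 4) * y ^ 2)))
    (Metric.ball_mem_nhds x one_pos)
    (.of_forall fun t => ((hw t).mul (hφc t)).aestronglyMeasurable)
    (integrable_mul_gaussPdf_sub (hw x) (hwM x) x) hF'meas
    (.of_forall fun y t ht => abs_add_mul_gaussPdf_sub_le (hwM t y) (hw'C t y) ?_)
    (((hyg.const_mul _).add (hg.const_mul _)).const_mul _)
    (.of_forall fun y t _ => (hderiv t y).mul (hasDerivAt_gaussPdf_sub y t))).2
  have := mem_ball_iff_norm.1 ht
  rw [Real.norm_eq_abs] at this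
  linarith [abs_sub_abs_le_abs_sub t x]

/-- `1 - δ_a(y)` for the logistic rule `δ_a(y) = exp (2 a y) / (exp (2 a y) + 1)`. -/
noncomputable def ruleCompl (a y : ℝ) : ℝ := 1 / (exp (2 * a * y) + 1)

lemma ruleCompl_pos (a y : ℝ) : 0 < ruleCompl a y := by
  unfold ruleCompl; positivity

lemma ruleCompl_lt_one (a y : ℝ) : ruleCompl a y < 1 := by
  unfold ruleCompl
  rw [div_lt_one (by positivity)]
  linarith [exp_pos (2 * a * y)]

lemma abs_ruleCompl_sq_le_one (a y : ℝ) : |ruleCompl a y ^ 2| ≤ 1 := by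
  rw [abs_of_nonneg (sq_nonneg _)]
  nlinarith [ruleCompl_pos a y, ruleCompl_lt_one a y]

@[fun_prop]
lemma continuous_ruleCompl (a : ℝ) : Continuous (ruleCompl a) := by
  unfold ruleCompl
  exact continuous_const.div (by fun_prop) fun y => by positivity

lemma ruleCompl_neg (a y : ℝ) : ruleCompl a (-y) = 1 - ruleCompl a y := by
  unfold ruleCompl
  rw [mul_neg, exp_neg]
  field_simp
  ring

lemma ruleCompl_antitone {a : ℝ} (ha : 0 ≤ a) : Antitone (ruleCompl a) := by
  intro y z hyz
  unfold ruleCompl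
  gcongr

lemma hasDerivAt_ruleCompl (t y : ℝ) :
    HasDerivAt (fun t => ruleCompl t y) (-2 * y * ruleCompl t y * (1 - ruleCompl t y)) t := by
  have h := ((((hasDerivAt_id' t).const_mul 2).mul_const y).exp.add_const 1).inv
    (by positivity : exp (2 * t * y) + 1 ≠ 0)
  simp only [ruleCompl, one_div]
  refine h.congr_deriv ?_
  field_simp
  ring

lemma hasDerivAt_ruleCompl_sq (t y : ℝ) :
    HasDerivAt (fun t => ruleCompl t y ^ 2)
      (-(4 * y) * (ruleCompl t y ^ 2 * (1 - ruleCompl t y))) t :=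
  ((hasDerivAt_ruleCompl t y).pow 2).congr_deriv (by push_cast; ring)

/-- The posterior probability of `θ = -x` given `y` under the uniform prior on `±x`. -/
lemma ruleCompl_eq_div_gaussPdf (x y : ℝ) :
    ruleCompl x y = gaussPdf (y + x) / (gaussPdf (y - x) + gaussPdf (y + x)) := by
  have := gaussPdf_pos (y + x)
  rw [gaussPdf_sub_eq_exp_mul, ruleCompl]
  field_simp

lemma ruleCompl_mul_le {a s' s z w : ℝ} (hs : s' ≤ s) (hz : w ≤ z) :
    ruleCompl a (z + s) * ruleCompl a (w + s') ≤ ruleCompl a (z + s') * ruleCompl a (w + s) := by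
  simp only [ruleCompl, mul_add, exp_add, div_mul_div_comm, one_mul]
  have key : 0 ≤ (exp (2 * a * z) - exp (2 * a * w)) * (exp (2 * a * s) - exp (2 * a * s')) := by
    rcases le_total 0 a with ha | ha
    · apply mul_nonneg <;> rw [sub_nonneg] <;> gcongr
    · exact mul_nonneg_of_nonpos_of_nonpos (sub_nonpos.2 (exp_le_exp.2 (by nlinarith)))
        (sub_nonpos.2 (exp_le_exp.2 (by nlinarith)))
  apply one_div_le_one_div_of_le (by positivity)
  nlinarith

/-- Risk of `δ_a` at the standardized mean `s` of the data, when the target is nonnegative. -/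
noncomputable def risk (a s : ℝ) : ℝ := ∫ y, ruleCompl a y ^ 2 * gaussPdf (y - s)

noncomputable def riskDeriv (a s : ℝ) : ℝ :=
  ∫ y, ruleCompl a y ^ 2 * ((y - s) * gaussPdf (y - s))

lemma rho_eq_risk (a : ℝ) : ρ a = risk a a := rfl

lemma integral_mul_gaussPdf_sub (f : ℝ → ℝ) (s : ℝ) :
    ∫ y, f y * gaussPdf (y - s) = ∫ z, f (z + s) * gaussPdf z := by
  rw [← integral_add_right_eq_self _ s]
  simp only [add_sub_cancel_right]

lemma integral_mul_sub_mul_gaussPdf_sub (f : ℝ → ℝ) (s : ℝ) :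
    ∫ y, f y * ((y - s) * gaussPdf (y - s)) = ∫ z, f (z + s) * (z * gaussPdf z) := by
  rw [← integral_add_right_eq_self _ s]
  simp only [add_sub_cancel_right]

lemma integrable_risk (a s : ℝ) : Integrable fun y => ruleCompl a y ^ 2 * gaussPdf (y - s) :=
  integrable_mul_gaussPdf_sub ((continuous_ruleCompl a).pow 2) (abs_ruleCompl_sq_le_one a) s

lemma integrable_ruleCompl_sq_add_mul_gaussPdf (a s : ℝ) :
    Integrable fun z => ruleCompl a (z + s) ^ 2 * gaussPdf z :=
  integrable_gaussPdf.bdd_mul (by fun_prop) (.of_forall fun z => abs_ruleCompl_sq_le_one a _)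

lemma risk_pos (a s : ℝ) : 0 < risk a s := by
  refine integral_pos_of_integrable_nonneg_nonzero (x := s) ?_ (integrable_risk a s)
    (fun y => by positivity [gaussPdf_pos (y - s)]) ?_
  · exact ((continuous_ruleCompl a).pow 2).mul (continuous_gaussPdf.comp (continuous_sub_right s))
  · exact (mul_pos (pow_pos (ruleCompl_pos a s) 2) (gaussPdf_pos _)).ne'

lemma risk_antitone {a : ℝ} (ha : 0 ≤ a) : Antitone (risk a) := by
  intro s' s hs
  simp only [risk, integral_mul_gaussPdf_sub (fun y => ruleCompl a y ^ 2)]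
  refine integral_mono (integrable_ruleCompl_sq_add_mul_gaussPdf a s)
    (integrable_ruleCompl_sq_add_mul_gaussPdf a s') fun z => ?_
  exact mul_le_mul_of_nonneg_right (pow_le_pow_left₀ (ruleCompl_pos a _).le
    (ruleCompl_antitone ha (by linarith)) 2) (gaussPdf_pos z).le

lemma risk_zero (s : ℝ) : risk 0 s = 1 / 4 := by
  simp only [risk, ruleCompl, mul_zero, zero_mul, exp_zero]
  rw [integral_const_mul, integral_gaussPdf_sub]
  norm_num

lemma hasDerivAt_risk (a s : ℝ) : HasDerivAt (risk a) (riskDeriv a s) s := by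
  have := hasDerivAt_integral_mul_gaussPdf_sub (w := fun _ y => ruleCompl a y ^ 2)
    (w' := fun _ _ => 0) (C := 0) s (fun _ => (continuous_ruleCompl a).pow 2) continuous_const
    (fun _ => abs_ruleCompl_sq_le_one a) (by simp) (fun _ _ => hasDerivAt_const _ _)
  simp only [zero_mul, zero_add] at this
  exact this

lemma differentiable_rho : Differentiable ℝ ρ := by
  intro x
  refine (hasDerivAt_integral_mul_gaussPdf_sub (w := fun t y => ruleCompl t y ^ 2) (C := 4) x
    (fun t => (continuous_ruleCompl t).pow 2) (by fun_prop) (fun t => abs_ruleCompl_sq_le_one t)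
    (fun t y => ?_) (fun t y => hasDerivAt_ruleCompl_sq t y)).differentiableAt
  have h0 := ruleCompl_pos t y
  have h1 := ruleCompl_lt_one t y
  have hpos : 0 < ruleCompl t y ^ 2 * (1 - ruleCompl t y) := by positivity [sub_pos.2 h1]
  have hle : ruleCompl t y ^ 2 * (1 - ruleCompl t y) ≤ 1 := by nlinarith [mul_pos h0 h0]
  rw [abs_mul, abs_neg, abs_mul, abs_of_pos hpos, abs_of_pos (by norm_num : (0 : ℝ) < 4)]
  nlinarith [abs_nonneg y]

lemma integrable_one_sub_ruleCompl_sq_mul (a x : ℝ) :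
    Integrable fun y => (1 - ruleCompl a y) ^ 2 * gaussPdf (y + x) :=
  (integrable_gaussPdf.comp_add_right x).bdd_mul (c := 1) (by fun_prop) (.of_forall fun y => by
    have := ruleCompl_pos a y
    have := ruleCompl_lt_one a y
    rw [Real.norm_eq_abs, abs_of_nonneg (sq_nonneg _)]
    nlinarith)

lemma two_mul_risk (a x : ℝ) : 2 * risk a x =
    ∫ y, (ruleCompl a y ^ 2 * gaussPdf (y - x) + (1 - ruleCompl a y) ^ 2 * gaussPdf (y + x)) := by
  have hsymm : risk a x = ∫ y, (1 - ruleCompl a y) ^ 2 * gaussPdf (y + x) := by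
    rw [risk, ← integral_neg_eq_self]
    congr 1 with y
    rw [ruleCompl_neg, ← gaussPdf_neg]
    ring_nf
  rw [integral_add (integrable_risk a x) (integrable_one_sub_ruleCompl_sq_mul a x), ← hsymm,
    two_mul]
  rfl

lemma sq_mul_add_sq_mul_le {p q : ℝ} (hp : 0 < p) (hq : 0 < q) (u : ℝ) :
    (q / (p + q)) ^ 2 * p + (1 - q / (p + q)) ^ 2 * q ≤ u ^ 2 * p + (1 - u) ^ 2 * q := by
  have hpq : 0 < p + q := by linarith
  have h : (q / (p + q)) ^ 2 * p + (1 - q / (p + q)) ^ 2 * q = p * q / (p + q) := by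
    field_simp; ring
  rw [h, div_le_iff₀ hpq]
  nlinarith [sq_nonneg ((p + q) * u - q)]

lemma rho_le_risk (a x : ℝ) : ρ x ≤ risk a x := by
  suffices 2 * ρ x ≤ 2 * risk a x by linarith
  rw [rho_eq_risk, two_mul_risk, two_mul_risk]
  refine integral_mono ?_ ?_ fun y => ?_
  · exact (integrable_risk x x).add (integrable_one_sub_ruleCompl_sq_mul x x)
  · exact (integrable_risk a x).add (integrable_one_sub_ruleCompl_sq_mul a x)
  · rw [ruleCompl_eq_div_gaussPdf]
    exact sq_mul_add_sq_mul_le (gaussPdf_pos _) (gaussPdf_pos _) _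

lemma deriv_rho (a : ℝ) : deriv ρ a = riskDeriv a a := by
  have hmin : IsLocalMin (fun x => risk a x - ρ x) a :=
    .of_forall fun x => by simp only [rho_eq_risk a, sub_self, sub_nonneg, rho_le_risk a x]
  have := hmin.hasDerivAt_eq_zero ((hasDerivAt_risk a a).sub (differentiable_rho a).hasDerivAt)
  linarith

lemma integral_prod_mul_of_integrable {f h : ℝ → ℝ} (hf : Integrable f) (hh : Integrable h) :
    Integrable (fun p : ℝ × ℝ => f p.1 * h p.2) ∧
      ∫ p : ℝ × ℝ, f p.1 * h p.2 = (∫ z, f z) * ∫ w, h w := by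
  rw [Measure.volume_eq_prod]
  exact ⟨hf.mul_prod hh, integral_prod_mul f h⟩

/-- `hv2` is the log-concavity of `v`, in ratio form. -/
lemma integral_shift_mul_le {v g : ℝ → ℝ} {M : ℝ} (hv : Continuous v) (hvM : ∀ y, |v y| ≤ M)
    (hg0 : ∀ z, 0 ≤ g z) (hg : Integrable g) (hzg : Integrable fun z => z * g z)
    (hv2 : ∀ ⦃s' s z w⦄, s' ≤ s → w ≤ z → v (z + s) * v (w + s') ≤ v (z + s') * v (w + s))
    {s' s : ℝ} (hs : s' ≤ s) :
    (∫ z, v (z + s) * (z * g z)) * ∫ z, v (z + s') * g z ≤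
      (∫ z, v (z + s') * (z * g z)) * ∫ z, v (z + s) * g z := by
  have hP : ∀ t, Integrable fun z => v (z + t) * g z := fun t =>
    hg.bdd_mul (hv.comp (continuous_add_const t)).aestronglyMeasurable
      (.of_forall fun z => hvM _)
  have hQ : ∀ t, Integrable fun z => v (z + t) * (z * g z) := fun t =>
    hzg.bdd_mul (hv.comp (continuous_add_const t)).aestronglyMeasurable
      (.of_forall fun z => hvM _)
  obtain ⟨i1, e1⟩ := integral_prod_mul_of_integrable (hQ s') (hP s)
  obtain ⟨i2, e2⟩ := integral_prod_mul_of_integrable (hQ s) (hP s')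
  obtain ⟨i3, e3⟩ := integral_prod_mul_of_integrable (hP s) (hQ s')
  obtain ⟨i4, e4⟩ := integral_prod_mul_of_integrable (hP s') (hQ s)
  have hnonneg : 0 ≤ ∫ p : ℝ × ℝ,
      ((v (p.1 + s') * (p.1 * g p.1) * (v (p.2 + s) * g p.2) -
          v (p.1 + s) * (p.1 * g p.1) * (v (p.2 + s') * g p.2)) +
        (v (p.1 + s) * g p.1 * (v (p.2 + s') * (p.2 * g p.2)) -
          v (p.1 + s') * g p.1 * (v (p.2 + s) * (p.2 * g p.2)))) := by
    refine integral_nonneg fun ⟨z, w⟩ => ?_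
    have hgg := mul_nonneg (hg0 z) (hg0 w)
    have key : 0 ≤ (z - w) * (v (z + s') * v (w + s) - v (z + s) * v (w + s')) := by
      rcases le_total w z with h | h
      · exact mul_nonneg (sub_nonneg.2 h) (sub_nonneg.2 (hv2 hs h))
      · exact mul_nonneg_of_nonpos_of_nonpos (sub_nonpos.2 h) (by linarith [hv2 hs h])
    calc (0 : ℝ) ≤ (z - w) * (v (z + s') * v (w + s) - v (z + s) * v (w + s')) * (g z * g w) :=
          mul_nonneg key hgg
      _ = _ := by ring
  have hsplit := integral_add (i1.sub i2) (i3.sub i4)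
  simp only [Pi.sub_apply] at hsplit
  rw [hsplit, integral_sub i1 i2, integral_sub i3 i4, e1, e2, e3, e4] at hnonneg
  linarith

lemma riskDeriv_mul_risk_le (a : ℝ) {s' s : ℝ} (hs : s' ≤ s) :
    riskDeriv a s * risk a s' ≤ riskDeriv a s' * risk a s := by
  simp only [risk, riskDeriv, integral_mul_gaussPdf_sub (fun y => ruleCompl a y ^ 2),
    integral_mul_sub_mul_gaussPdf_sub (fun y => ruleCompl a y ^ 2)]
  refine integral_shift_mul_le (by fun_prop) (abs_ruleCompl_sq_le_one a)
    (fun z => (gaussPdf_pos z).le) integrable_gaussPdf integrable_mul_gaussPdf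
    (fun s' s z w hs hz => ?_) hs
  rw [← mul_pow, ← mul_pow]
  exact pow_le_pow_left₀ (mul_pos (ruleCompl_pos _ _) (ruleCompl_pos _ _)).le
    (ruleCompl_mul_le hs hz) 2

/-- `hBA` says that `A / B = (log B)'` is antitone, which makes `(s + κ)² B s` unimodal. -/
lemma add_sq_mul_le_of_critical {B A : ℝ → ℝ} {κ a s : ℝ} (hB : ∀ x, HasDerivAt B (A x) x)
    (hBpos : ∀ x, 0 < B x) (hBA : ∀ ⦃x' x⦄, x' ≤ x → A x * B x' ≤ A x' * B x)
    (ha : -κ < a) (hcrit : 2 * B a + (a + κ) * A a = 0) (hs : -κ ≤ s) :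
    (s + κ) ^ 2 * B s ≤ (a + κ) ^ 2 * B a := by
  set G : ℝ → ℝ := fun x => (x + κ) ^ 2 * B x
  have hG : ∀ x, HasDerivAt G ((x + κ) * (2 * B x + (x + κ) * A x)) x := fun x =>
    ((((hasDerivAt_id' x).add_const κ).fun_pow 2).mul (hB x)).congr_deriv (by simp; ring)
  have hGc : Continuous G := continuous_iff_continuousAt.2 fun x => (hG x).continuousAt
  have hAa : A a < 0 := by nlinarith [hBpos a]
  rcases le_total s a with hsa | has
  · refine monotoneOn_of_hasDerivWithinAt_nonneg (convex_Icc s a) hGc.continuousOn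
      (fun x _ => (hG x).hasDerivWithinAt) (fun x hx => ?_) ⟨le_rfl, hsa⟩ ⟨hsa, le_rfl⟩ hsa
    rw [interior_Icc] at hx
    have hxκ : 0 < x + κ := by linarith [hx.1]
    have h1 : (a + κ) * A a * B x ≤ (x + κ) * A x * B a := by
      nlinarith [mul_le_mul_of_nonneg_left (hBA hx.2.le) hxκ.le,
        mul_nonneg (mul_nonneg (sub_nonneg.2 hx.2.le) (neg_nonneg.2 hAa.le)) (hBpos x).le]
    have h2 : 0 ≤ B a * (2 * B x + (x + κ) * A x) := by nlinarith [hBpos x]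
    exact mul_nonneg hxκ.le ((mul_nonneg_iff_of_pos_left (hBpos a)).1 h2)
  · refine antitoneOn_of_hasDerivWithinAt_nonpos (convex_Ici a) hGc.continuousOn
      (fun x _ => (hG x).hasDerivWithinAt) (fun x hx => ?_) Set.self_mem_Ici has has
    rw [interior_Ici] at hx
    have hax : a ≤ x := le_of_lt hx
    have hxκ : 0 < x + κ := by linarith
    have h1 : (x + κ) * A x * B a ≤ (a + κ) * A a * B x := by
      nlinarith [mul_le_mul_of_nonneg_left (hBA hax) hxκ.le,
        mul_nonneg (mul_nonneg (sub_nonneg.2 hax) (neg_nonneg.2 hAa.le)) (hBpos x).le]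
    have h2 : B a * (2 * B x + (x + κ) * A x) ≤ 0 := by nlinarith [hBpos x]
    exact mul_nonpos_of_nonneg_of_nonpos hxκ.le ((mul_nonpos_iff_pos_imp_nonpos.1 h2).1 (hBpos a))

lemma critical_of_isMaxOn {f : ℝ → ℝ} {κ τ a : ℝ} (hf : Differentiable ℝ f) (hκ : 0 < κ)
    (hfa : 0 < f a) (ha0 : 0 < a) (haτ : a ≤ τ)
    (hτ : ∀ t, 0 ≤ t → t ^ 2 * f t ≤ τ ^ 2 * f τ)
    (hamax : ∀ x ∈ Set.Icc 0 τ, (x + κ) ^ 2 * f x ≤ (a + κ) ^ 2 * f a) :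
    2 * f a + (a + κ) * deriv f a = 0 := by
  have hg : HasDerivAt (fun x => (x + κ) ^ 2 * f x)
      ((a + κ) * (2 * f a + (a + κ) * deriv f a)) a :=
    ((((hasDerivAt_id' a).add_const κ).fun_pow 2).mul (hf a).hasDerivAt).congr_deriv
      (by simp; ring)
  have haκ : 0 < a + κ := by linarith
  rcases haτ.lt_or_eq with hlt | rfl
  · have hmax : IsLocalMax (fun x => (x + κ) ^ 2 * f x) a :=
      Filter.mem_of_superset (Ioo_mem_nhds ha0 hlt) fun x hx => hamax x ⟨hx.1.le, hx.2.le⟩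
    exact (mul_eq_zero.1 (hmax.hasDerivAt_eq_zero hg)).resolve_left haκ.ne'
  · exfalso
    -- `a = τ` is an interior maximum of `t² f t`, which forces `f' a = -2 f a / a` ...
    have hmaxτ : IsLocalMax (fun t => t ^ 2 * f t) a :=
      Filter.mem_of_superset (Ioi_mem_nhds ha0) fun t ht => hτ t (le_of_lt ht)
    have hτcrit := hmaxτ.hasDerivAt_eq_zero
      ((((hasDerivAt_id' a).fun_pow 2).mul (hf a).hasDerivAt))
    -- ... but then `(x + κ)² f x` would be strictly decreasing at its maximum on `[0, a]`.
    have hleft := (IsMaxOn.localize (f := fun x => (x + κ) ^ 2 * f x) (s := Set.Icc 0 a)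
      hamax).hasFDerivWithinAt_nonpos hg.hasFDerivAt.hasFDerivWithinAt
      (y := -a) (mem_posTangentConeAt_of_segment_subset ?_)
    · simp only [ContinuousLinearMap.toSpanSingleton_apply, smul_eq_mul, neg_mul,
        Left.neg_nonpos_iff, Nat.cast_ofNat, Nat.add_one_sub_one, pow_one, mul_one] at hleft hτcrit
      have hf' : 2 * f a + a * deriv f a = 0 := by
        refine (mul_eq_zero.1 (?_ : a * (2 * f a + a * deriv f a) = 0)).resolve_left ha0.ne'
        rw [← hτcrit]; ring
      have : a * ((a + κ) * (2 * f a + (a + κ) * deriv f a)) = -(2 * κ * (a + κ) * f a) := by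
        linear_combination (a + κ) ^ 2 * hf'
      nlinarith [mul_pos (mul_pos hκ haκ) hfa]
    · exact (convex_Icc 0 a).segment_subset ⟨ha0.le, le_rfl⟩ (by simp [ha0.le])

lemma integral_mul_gaussPdf_div (f : ℝ → ℝ) {σ : ℝ} (hσ : 0 < σ) (c : ℝ) :
    ∫ x, f (x / σ) * (σ⁻¹ * gaussPdf ((x - c) / σ)) = ∫ y, f y * gaussPdf (y - c / σ) := by
  have h := Measure.integral_comp_div (fun y => f y * gaussPdf (y - c / σ)) σ
  simp only [smul_eq_mul, abs_of_pos hσ] at h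
  simp only [sub_div, mul_left_comm _ σ⁻¹, integral_const_mul, h]
  field_simp

section Rsq

variable {σ a : ℝ} {δ : ℝ → ℝ}

lemma Rsq_eq_of_nonneg (hσ : 0 < σ) (hδ : ∀ x, δ x = 1 - ruleCompl a (x / σ)) {θe θt : ℝ}
    (hθ : 0 ≤ θt) : Rsq σ δ θe θt = θt ^ 2 * risk a (θe / σ) := by
  simp only [Rsq, if_pos hθ, hδ, sub_sub_cancel]
  rw [integral_mul_gaussPdf_div (fun y => ruleCompl a y ^ 2) hσ]
  rfl

lemma Rsq_eq_of_neg (hσ : 0 < σ) (hδ : ∀ x, δ x = 1 - ruleCompl a (x / σ)) {θe θt : ℝ}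
    (hθ : θt < 0) : Rsq σ δ θe θt = θt ^ 2 * risk a (-θe / σ) := by
  rw [Rsq, if_neg hθ.not_ge, risk, ← integral_mul_gaussPdf_div _ hσ, ← integral_neg_eq_self]
  congr 2 with x
  rw [hδ, ← ruleCompl_neg, ← gaussPdf_neg]
  ring_nf

lemma Rsq_le (ha : 0 ≤ a) (hσ : 0 < σ) (hδ : ∀ x, δ x = 1 - ruleCompl a (x / σ)) {k θe θt : ℝ}
    (hθ : (θe, θt) ∈ Θset k) : Rsq σ δ θe θt ≤ θt ^ 2 * risk a (|θt| / σ - k / σ) := by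
  obtain ⟨h1, h2⟩ := hθ
  rcases le_or_gt 0 θt with ht | ht
  · rw [Rsq_eq_of_nonneg hσ hδ ht]
    refine mul_le_mul_of_nonneg_left (risk_antitone ha ?_) (sq_nonneg _)
    rw [abs_of_nonneg ht, ← sub_div]
    gcongr
    linarith
  · rw [Rsq_eq_of_neg hσ hδ ht]
    refine mul_le_mul_of_nonneg_left (risk_antitone ha ?_) (sq_nonneg _)
    rw [abs_of_neg ht, ← sub_div]
    gcongr
    linarith

lemma not_bddAbove_Rsq (hσ : 0 < σ) (hδ : ∀ x, δ x = 1 - ruleCompl 0 (x / σ)) {k : ℝ}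
    (hk : 0 ≤ k) : ¬ BddAbove (Set.range fun p : Θset k => Rsq σ δ p.1.1 p.1.2) := by
  rintro ⟨M, hM⟩
  set t := 2 * (|M| + 1)
  have hmem : ((t, t) : ℝ × ℝ) ∈ Θset k := ⟨by linarith, by linarith⟩
  have : Rsq σ δ t t ≤ M := hM ⟨⟨(t, t), hmem⟩, rfl⟩
  rw [Rsq_eq_of_nonneg hσ hδ (by positivity), risk_zero] at this
  nlinarith [le_abs_self M, abs_nonneg M]

end Rsq

theorem stmt_10_general (σ k τstar astar : ℝ) (hσ : 0 < σ) (hk : 0 < k)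
    (hτmax : ∀ τ : ℝ, 0 ≤ τ → τ ^ 2 * ρ τ ≤ τstar ^ 2 * ρ τstar)
    (ha : astar ∈ Set.Icc 0 τstar)
    (hamax : ∀ a ∈ Set.Icc 0 τstar,
      (a + k / σ) ^ 2 * ρ a ≤ (astar + k / σ) ^ 2 * ρ astar)
    (δH : ℝ → ℝ)
    (hδH : ∀ x, δH x =
      Real.exp (2 * astar * x / σ) / (Real.exp (2 * astar * x / σ) + 1)) :
    (⨆ p : Θset k, Rsq σ δH p.1.1 p.1.2) ≤ σ ^ 2 * (astar + k / σ) ^ 2 * ρ astar := by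
  have hδ : ∀ x, δH x = 1 - ruleCompl astar (x / σ) := fun x => by
    rw [hδH, ruleCompl, mul_div_assoc]
    field_simp
    ring
  have hρ := risk_pos astar astar
  rcases ha.1.eq_or_lt with h0 | hpos
  · subst h0
    rw [Real.iSup_of_not_bddAbove (not_bddAbove_Rsq hσ hδ hk.le)]
    positivity
  have hcrit := critical_of_isMaxOn differentiable_rho (by positivity) hρ hpos ha.2 hτmax hamax
  rw [deriv_rho, rho_eq_risk] at hcrit
  refine Real.iSup_le (fun ⟨⟨θe, θt⟩, hθ⟩ => ?_) (by rw [rho_eq_risk]; positivity)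
  calc Rsq σ δH θe θt ≤ θt ^ 2 * risk astar (|θt| / σ - k / σ) := Rsq_le hpos.le hσ hδ hθ
    _ = σ ^ 2 * ((|θt| / σ - k / σ + k / σ) ^ 2 * risk astar (|θt| / σ - k / σ)) := by
        rw [sub_add_cancel, div_pow, sq_abs]
        field_simp
    _ ≤ σ ^ 2 * ((astar + k / σ) ^ 2 * risk astar astar) := by
        refine mul_le_mul_of_nonneg_left (add_sq_mul_le_of_critical (hasDerivAt_risk astar)
          (risk_pos astar) (fun _ _ => riskDeriv_mul_risk_le astar) ?_ hcrit ?_) (sq_nonneg σ)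
        · linarith [div_pos hk hσ]
        · linarith [div_nonneg (abs_nonneg θt) hσ.le]
    _ = σ ^ 2 * (astar + k / σ) ^ 2 * ρ astar := by rw [rho_eq_risk]; ring

/-- The worst-case mean square regret of δ_H* over the full two-dimensional parameter
space Θ is bounded by σ²(a* + k/σ)²ρ(a*). -/
theorem stmt_10 (σ k τstar astar : ℝ) (hσ : 0 < σ) (hk : 0 < k)
    (hτ0 : 0 ≤ τstar)
    (hτmax : ∀ τ : ℝ, 0 ≤ τ → τ ^ 2 * ρ τ ≤ τstar ^ 2 * ρ τstar)
    (ha : astar ∈ Set.Icc 0 τstar)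
    (hamax : ∀ a ∈ Set.Icc 0 τstar,
      (a + k / σ) ^ 2 * ρ a ≤ (astar + k / σ) ^ 2 * ρ astar)
    (δH : ℝ → ℝ)
    (hδH : ∀ x, δH x =
      Real.exp (2 * astar * x / σ) / (Real.exp (2 * astar * x / σ) + 1)) :
    (⨆ p : Θset k, Rsq σ δH p.1.1 p.1.2) ≤ σ ^ 2 * (astar + k / σ) ^ 2 * ρ astar :=
  stmt_10_general σ k τstar astar hσ hk hτmax ha hamax δH hδH
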